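/- Fix reals a ∈ (0,1), b ∈ (0,1], s > 0, ϰ > 1 and an integer k ≥ 1. Define ū := sup{u : 0 < u < k and a(b(max{u/s,1})^{2u}(1/ϰ)^u)^{1/(k−u)} < 1}, and for u ∈ [0, ū) define ζ(u) := (1 − a(b(max{u/s,1})^{2u}(1/ϰ)^u)^{1/(k−u)})^{k−u}. If k ≥ 2 ln(1/b) + 2√ϰ s, then sup_{u∈[0,ū)} ζ(u) ≤ exp(−(a/2)(k − √ϰ s)); if in addition a ≤ 1/3, then sup_{u∈[0,ū)} ζ(u) ≤ (1 − a/2)^{k − √ϰ s}. -/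

import Mathlib

noncomputable section

open scoped BigOperators Classical

/-- Vectors in `ℝⁿ` with the Euclidean norm. -/
abbrev V (n : ℕ) := EuclideanSpace ℝ (Fin n)

/-- The Euclidean dot product `uᵀv`. -/
def dot {n : ℕ} (u v : V n) : ℝ := ∑ i, u i * v i

/-- The Hessian quadratic form `dᵀ∇²f(x)d`. -/
def hessQ {n : ℕ} (f : V n → ℝ) (x d : V n) : ℝ := iteratedFDeriv ℝ 2 f x ![d, d]

/-- The weighted norm `‖d‖ₓ = (dᵀ∇²f(x)d)^{1/2}`. -/
def wnorm {n : ℕ} (f : V n → ℝ) (x d : V n) : ℝ := Real.sqrt (hessQ f x d)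

/-- `f` is `μ`-strongly convex. -/
def StrongConvex {n : ℕ} (μ : ℝ) (f : V n → ℝ) : Prop :=
  ∀ x y : V n, ∀ l : ℝ, 0 ≤ l → l ≤ 1 →
    f (l • x + (1 - l) • y) ≤ l * f x + (1 - l) * f y - l * (1 - l) * μ / 2 * ‖x - y‖ ^ 2

/-- `f` has `L`-Lipschitz continuous gradient. -/
def LipschitzGrad {n : ℕ} (L : ℝ) (f : V n → ℝ) : Prop :=
  ∀ x y : V n, ‖gradient f x - gradient f y‖ ≤ L * ‖x - y‖

/-- `f` is `M`-self-concordant: `|D³f(x)[d,d,d]| ≤ 2M (dᵀ∇²f(x)d)^{3/2}`. -/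
def SelfConcordant {n : ℕ} (M : ℝ) (f : V n → ℝ) : Prop :=
  ∀ x d : V n, |iteratedFDeriv ℝ 3 f x ![d, d, d]| ≤ 2 * M * hessQ f x d ^ ((3 : ℝ) / 2)

/-- `f` has `L₂`-Lipschitz continuous Hessian. -/
def LipschitzHessian {n : ℕ} (L₂ : ℝ) (f : V n → ℝ) : Prop :=
  ∀ x y : V n, ‖iteratedFDeriv ℝ 2 f x - iteratedFDeriv ℝ 2 f y‖ ≤ L₂ * ‖x - y‖

/-- `ω(z) = z - ln(1+z)`. -/
def omegaFn (z : ℝ) : ℝ := z - Real.log (1 + z)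

/-- `ω⋆(z) = -z - ln(1-z)`. -/
def omegaStar (z : ℝ) : ℝ := -z - Real.log (1 - z)

/-- Matrix–vector multiplication acting on Euclidean space. -/
def mulv {n : ℕ} (A : Matrix (Fin n) (Fin n) ℝ) (v : V n) : V n :=
  (EuclideanSpace.equiv (Fin n) ℝ).symm (A.mulVec (EuclideanSpace.equiv (Fin n) ℝ v))

/-- `g_k = ∇f(x_k)`. -/
def gvec {n : ℕ} (f : V n → ℝ) (x : ℕ → V n) (k : ℕ) : V n := gradient f (x k)

/-- `d_k = -B_k⁻¹ g_k`. -/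
def dvec {n : ℕ} (f : V n → ℝ) (x : ℕ → V n) (B : ℕ → Matrix (Fin n) (Fin n) ℝ) (k : ℕ) : V n :=
  -(mulv (B k)⁻¹ (gvec f x k))

/-- `η_k = -g_kᵀd_k / ‖d_k‖_{x_k}`. -/
def etaSeq {n : ℕ} (f : V n → ℝ) (x : ℕ → V n) (B : ℕ → Matrix (Fin n) (Fin n) ℝ) (k : ℕ) : ℝ :=
  -(dot (gvec f x k) (dvec f x B k)) / wnorm f (x k) (dvec f x B k)

/-- The adaptive step size `t_k = η_k / ((1 + M η_k) ‖d_k‖_{x_k})`. -/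
def tSeq {n : ℕ} (f : V n → ℝ) (M : ℝ) (x : ℕ → V n) (B : ℕ → Matrix (Fin n) (Fin n) ℝ)
    (k : ℕ) : ℝ :=
  etaSeq f x B k / ((1 + M * etaSeq f x B k) * wnorm f (x k) (dvec f x B k))

/-- `s_k = x_{k+1} - x_k`. -/
def svec {n : ℕ} (x : ℕ → V n) (k : ℕ) : V n := x (k + 1) - x k

/-- `y_k = g_{k+1} - g_k`. -/
def yvec {n : ℕ} (f : V n → ℝ) (x : ℕ → V n) (k : ℕ) : V n := gvec f x (k + 1) - gvec f x k

/-- The outer product `u vᵀ`. -/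
def outer {n : ℕ} (u v : V n) : Matrix (Fin n) (Fin n) ℝ := Matrix.of fun i j => u i * v j

/-- The adaptive BFGS method (Algorithm 1). -/
structure AdaptiveBFGS {n : ℕ} (f : V n → ℝ) (M : ℝ) (x : ℕ → V n)
    (B : ℕ → Matrix (Fin n) (Fin n) ℝ) : Prop where
  posdef : (B 0).PosDef
  step : ∀ k, x (k + 1) = x k + tSeq f M x B k • dvec f x B k
  update : ∀ k, B (k + 1) =
    B k - (dot (svec x k) (mulv (B k) (svec x k)))⁻¹ • (B k * outer (svec x k) (svec x k) * B k)
      + (dot (yvec f x k) (svec x k))⁻¹ • outer (yvec f x k) (yvec f x k)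

/-- `α_k = ‖d_k‖_{x_k} / (√L ‖d_k‖)`. -/
def alphaSeq {n : ℕ} (f : V n → ℝ) (L : ℝ) (x : ℕ → V n) (B : ℕ → Matrix (Fin n) (Fin n) ℝ)
    (k : ℕ) : ℝ :=
  wnorm f (x k) (dvec f x B k) / (Real.sqrt L * ‖dvec f x B k‖)

/-- The smoothness aided adaptive step size `t̃_k`. -/
def ttSeq {n : ℕ} (f : V n → ℝ) (M L : ℝ) (x : ℕ → V n) (B : ℕ → Matrix (Fin n) (Fin n) ℝ)
    (k : ℕ) : ℝ :=
  if (1 + M * etaSeq f x B k) * alphaSeq f L x B k ≤ 1 then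
    etaSeq f x B k / ((1 + M * etaSeq f x B k) * wnorm f (x k) (dvec f x B k))
  else
    (M * etaSeq f x B k * alphaSeq f L x B k ^ 2 + (1 - alphaSeq f L x B k) ^ 2)
      / (M * wnorm f (x k) (dvec f x B k))

/-- The smoothness aided adaptive BFGS method SA²-BFGS (Algorithm 3). -/
structure SA2BFGS {n : ℕ} (f : V n → ℝ) (M L : ℝ) (x : ℕ → V n)
    (B : ℕ → Matrix (Fin n) (Fin n) ℝ) : Prop where
  posdef : (B 0).PosDef
  step : ∀ k, x (k + 1) = x k + ttSeq f M L x B k • dvec f x B k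
  update : ∀ k, B (k + 1) =
    B k - (dot (svec x k) (mulv (B k) (svec x k)))⁻¹ • (B k * outer (svec x k) (svec x k) * B k)
      + (dot (yvec f x k) (svec x k))⁻¹ • outer (yvec f x k) (yvec f x k)

/-- The positive semidefinite square root (Mathlib's former `Matrix.PosSemidef.sqrt`, since removed). -/
def Matrix.PosSemidef.sqrt {n : Type*} [Fintype n] [DecidableEq n]
    {A : Matrix n n ℝ} (hA : A.PosSemidef) : Matrix n n ℝ :=
  hA.1.eigenvectorUnitary.1 * Matrix.diagonal ((↑) ∘ Real.sqrt ∘ hA.1.eigenvalues) *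
    (star hA.1.eigenvectorUnitary : Matrix n n ℝ)

/-- `ĝ_k = P^{-1/2} g_k`. -/
def hatg {n : ℕ} (f : V n → ℝ) (x : ℕ → V n) (P : Matrix (Fin n) (Fin n) ℝ) (hP : P.PosDef)
    (k : ℕ) : V n :=
  mulv (hP.posSemidef.sqrt)⁻¹ (gvec f x k)

/-- `ŝ_k = P^{1/2} s_k`. -/
def hats {n : ℕ} (x : ℕ → V n) (P : Matrix (Fin n) (Fin n) ℝ) (hP : P.PosDef) (k : ℕ) : V n :=
  mulv hP.posSemidef.sqrt (svec x k)

/-- `ŷ_k = P^{-1/2} y_k`. -/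
def haty {n : ℕ} (f : V n → ℝ) (x : ℕ → V n) (P : Matrix (Fin n) (Fin n) ℝ) (hP : P.PosDef)
    (k : ℕ) : V n :=
  mulv (hP.posSemidef.sqrt)⁻¹ (yvec f x k)

/-- `cos θ̂_k = -ĝ_kᵀŝ_k / (‖ĝ_k‖ ‖ŝ_k‖)`. -/
def cosθ {n : ℕ} (f : V n → ℝ) (x : ℕ → V n) (P : Matrix (Fin n) (Fin n) ℝ) (hP : P.PosDef)
    (k : ℕ) : ℝ :=
  -(dot (hatg f x P hP k) (hats x P hP k)) / (‖hatg f x P hP k‖ * ‖hats x P hP k‖)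

/-- `m̂_k = ŷ_kᵀŝ_k / ‖ŝ_k‖²`. -/
def mhat {n : ℕ} (f : V n → ℝ) (x : ℕ → V n) (P : Matrix (Fin n) (Fin n) ℝ) (hP : P.PosDef)
    (k : ℕ) : ℝ :=
  dot (haty f x P hP k) (hats x P hP k) / ‖hats x P hP k‖ ^ 2

/-- `q̂_k = ‖ĝ_k‖² / (f(x_k) - f(x*))`. -/
def qhat {n : ℕ} (f : V n → ℝ) (x : ℕ → V n) (xstar : V n) (P : Matrix (Fin n) (Fin n) ℝ)
    (hP : P.PosDef) (k : ℕ) : ℝ :=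
  ‖hatg f x P hP k‖ ^ 2 / (f (x k) - f xstar)

/-- The potential function `Ψ(A) = tr(A) - ln det(A) - n`. -/
def Psi {n : ℕ} (A : Matrix (Fin n) (Fin n) ℝ) : ℝ := A.trace - Real.log A.det - n

/-- The Hessian matrix `∇²f(x)` in the standard basis. -/
def hessMatrix {n : ℕ} (f : V n → ℝ) (x : V n) : Matrix (Fin n) (Fin n) ℝ :=
  Matrix.of fun i j =>
    iteratedFDeriv ℝ 2 f x ![EuclideanSpace.single i (1 : ℝ), EuclideanSpace.single j (1 : ℝ)]

/-!
Write `m = k - u` and `X = b · max(u/s, 1)^{2u} · ϰ^{-u}`, so that `ζ u = (1 - a X^{1/m})^m`.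
As `X^{1/m} = exp(ln X / m) ≥ 1 + ln X / m`, we get `ζ u ≤ exp(-m a X^{1/m}) ≤ exp(-a (m + ln X))`;
likewise the pointwise estimate `1 - a e^θ ≤ (1 - a/2)^{2(1+θ)}` for `θ > -1` gives
`ζ u ≤ (1 - a/2)^{2(m + ln X)}`. Both bounds decrease in `m + ln X`, and
`m + ln X ≥ (k - √ϰ s)/2` because `u (1 + ln ϰ - 2 ln max(u/s, 1)) ≤ (3/2) √ϰ s`
(maximize `w (1 + ln ϰ - 2 ln w)` over `w > 0`).

The condition `u < ū` only provides some `u' > u` with `a X(u')^{1/(k-u')} < 1`. This propagates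
down to `u`: on `[0, u']`, `(k - v) ln a + ln X(v)` is dominated by a function affine in `v` that is
negative at `v = 0` and agrees with it at `v = u'`.
-/

section

open Real

lemma exp_mul_sub_add_one_le_exp (x y : ℝ) : exp y * (x - y + 1) ≤ exp x := by
  calc exp y * (x - y + 1) ≤ exp y * exp (x - y) :=
        mul_le_mul_of_nonneg_left (add_one_le_exp _) (exp_pos y).le
    _ = exp x := by rw [← exp_add, add_sub_cancel]

lemma three_fifths_le_exp_neg_half : (3 / 5 : ℝ) ≤ exp (-(1 / 2)) := by
  have hsq : exp (1 / 2) * exp (1 / 2) = exp 1 := by rw [← exp_add]; norm_num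
  have hhalf : exp (1 / 2 : ℝ) ≤ 5 / 3 := by nlinarith [exp_pos (1 / 2 : ℝ), exp_one_lt_d9]
  rw [exp_neg, show (3 / 5 : ℝ) = (5 / 3)⁻¹ by norm_num]
  exact inv_anti₀ (exp_pos _) hhalf

/- `a * exp θ` and the right side are convex in `θ`: bound each by its tangent line at `θ = 0`
when `θ ≥ -1/4`, and at `θ = -1/2` when `θ ≤ -1/4`. -/
lemma one_sub_mul_exp_le_rpow {a θ : ℝ} (ha : 0 ≤ a) (ha1 : a ≤ 1) (hθ : -1 < θ) :
    1 - a * exp θ ≤ (1 - a / 2) ^ (2 * (1 + θ)) := by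
  set v := 1 - a / 2 with hv
  have hv0 : 0 < v := by linarith
  rw [rpow_def_of_pos hv0]
  set ℓ := log v with hℓ
  have hℓ_le : ℓ ≤ -(a / 2) := by linarith [log_le_sub_one_of_pos hv0]
  have hvℓ_ge : -(a / 2) ≤ v * ℓ := by
    have := log_le_sub_one_of_pos (inv_pos.2 hv0)
    rw [log_inv] at this
    nlinarith [mul_inv_cancel₀ hv0.ne']
  rcases le_total (-(1 / 4)) θ with hθ' | hθ'
  · have hR := exp_mul_sub_add_one_le_exp (ℓ * (2 * (1 + θ))) (2 * ℓ)
    rw [show exp (2 * ℓ) = v ^ 2 by rw [two_mul, exp_add, hℓ, exp_log hv0, sq]] at hR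
    have hL : a * (1 + θ) ≤ a * exp θ := mul_le_mul_of_nonneg_left (by linarith [add_one_le_exp θ]) ha
    have hX0 : 0 ≤ 2 * v ^ 2 * ℓ + a := by nlinarith
    have hXa : 2 * v ^ 2 * ℓ + a ≤ a ^ 2 := by nlinarith
    nlinarith [mul_nonneg (by linarith : 0 ≤ θ + 1 / 4) hX0]
  · have hR := exp_mul_sub_add_one_le_exp (ℓ * (2 * (1 + θ))) ℓ
    rw [hℓ, exp_log hv0, ← hℓ] at hR
    have hL : a * (3 / 5 * (θ + 3 / 2)) ≤ a * exp θ := by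
      refine mul_le_mul_of_nonneg_left (le_trans ?_ (exp_mul_sub_add_one_le_exp θ (-(1 / 2)))) ha
      nlinarith [three_fifths_le_exp_neg_half]
    rcases le_total 0 (θ + 1 / 2) with hδ | hδ
    · nlinarith [mul_le_mul_of_nonneg_left hvℓ_ge hδ, mul_nonneg ha (by linarith : 0 ≤ -(1 / 4) - θ)]
    · have hvℓ_le : v * ℓ ≤ -(a / 2) * v := by nlinarith
      nlinarith [mul_le_mul_of_nonpos_left hvℓ_le hδ,
        mul_nonneg (mul_nonneg (neg_nonneg.2 hδ) ha) (by linarith : 0 ≤ v - 1 / 2)]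

lemma one_sub_mul_rpow_inv_rpow_le_exp {a X m : ℝ} (ha : 0 ≤ a) (hX : 0 < X) (hm : 0 < m)
    (hE : a * X ^ m⁻¹ < 1) : (1 - a * X ^ m⁻¹) ^ m ≤ exp (-(a * (m + log X))) := by
  have hE_ge : a * (m + log X) ≤ a * X ^ m⁻¹ * m := by
    have h := mul_le_mul_of_nonneg_left (add_one_le_exp (log X * m⁻¹)) ha
    rw [← rpow_def_of_pos hX] at h
    calc a * (m + log X) = a * (log X * m⁻¹ + 1) * m := by field_simp; ring
      _ ≤ a * X ^ m⁻¹ * m := mul_le_mul_of_nonneg_right h hm.le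
  rw [rpow_def_of_pos (by linarith)]
  refine exp_le_exp.2 ?_
  nlinarith [log_le_sub_one_of_pos (by linarith : 0 < 1 - a * X ^ m⁻¹)]

lemma one_sub_mul_rpow_inv_rpow_le_rpow {a X m : ℝ} (ha : 0 ≤ a) (ha1 : a ≤ 1) (hX : 0 < X)
    (hm : 0 < m) (hmX : 0 < m + log X) (hE : a * X ^ m⁻¹ < 1) :
    (1 - a * X ^ m⁻¹) ^ m ≤ (1 - a / 2) ^ (2 * (m + log X)) := by
  have hθ : -1 < log X * m⁻¹ := by
    rw [← div_eq_mul_inv, lt_div_iff₀ hm]; linarith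
  have h := one_sub_mul_exp_le_rpow ha ha1 hθ
  rw [← rpow_def_of_pos hX] at h
  calc (1 - a * X ^ m⁻¹) ^ m ≤ ((1 - a / 2) ^ (2 * (1 + log X * m⁻¹))) ^ m :=
        rpow_le_rpow (by linarith) h hm.le
    _ = (1 - a / 2) ^ (2 * (m + log X)) := by
        rw [← rpow_mul (by linarith)]
        congr 1
        field_simp

lemma mul_rpow_inv_lt_one_iff {a X m : ℝ} (ha : 0 < a) (hX : 0 < X) (hm : 0 < m) :
    a * X ^ m⁻¹ < 1 ↔ m * log a + log X < 0 := by
  have hE : a * X ^ m⁻¹ = exp (log a + log X * m⁻¹) := by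
    rw [rpow_def_of_pos hX, exp_add, exp_log ha]
  rw [hE, exp_lt_one_iff, show m * log a + log X = m * (log a + log X * m⁻¹) by field_simp]
  constructor <;> intro h <;> nlinarith

lemma mul_one_add_log_sub_two_mul_log_le {ϰ w : ℝ} (hϰ : 0 < ϰ) (hw : 0 < w) :
    w * (1 + log ϰ - 2 * log w) ≤ 3 / 2 * √ϰ := by
  set y := 3 / 4 * √ϰ / w with hy
  have hsqrt : 0 < √ϰ := sqrt_pos.2 hϰ
  have hsplit : log ϰ / 2 - log w = log (4 / 3) + log y := by
    rw [← log_sqrt hϰ.le, ← log_div hsqrt.ne' hw.ne', ← log_mul (by norm_num) (by positivity)]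
    congr 1
    rw [hy]
    field_simp
  have hbound : 1 + log ϰ - 2 * log w ≤ 2 * y - 1 / 3 := by
    nlinarith [log_le_sub_one_of_pos (by norm_num : (0 : ℝ) < 4 / 3),
      log_le_sub_one_of_pos (by positivity : 0 < y)]
  have hwy : w * y = 3 / 4 * √ϰ := by rw [hy]; field_simp
  nlinarith [mul_le_mul_of_nonneg_left hbound hw.le]

def growthFactor (b s ϰ u : ℝ) : ℝ := b * (max (u / s) 1) ^ (2 * u) * (1 / ϰ) ^ u

lemma growthFactor_pos {b ϰ : ℝ} (s u : ℝ) (hb : 0 < b) (hϰ : 0 < ϰ) :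
    0 < growthFactor b s ϰ u := by
  unfold growthFactor
  have : 0 < max (u / s) 1 := lt_max_of_lt_right one_pos
  positivity

lemma log_growthFactor {b ϰ : ℝ} (s u : ℝ) (hb : 0 < b) (hϰ : 0 < ϰ) :
    log (growthFactor b s ϰ u) = log b + 2 * u * log (max (u / s) 1) - u * log ϰ := by
  have hM : 0 < max (u / s) 1 := lt_max_of_lt_right one_pos
  unfold growthFactor
  rw [log_mul (by positivity) (by positivity), log_mul hb.ne' (by positivity), log_rpow hM,
    log_rpow (by positivity), one_div, log_inv]
  ring

lemma mul_one_add_log_sub_two_mul_log_max_le {s ϰ u : ℝ} (hs : 0 < s) (hϰ : 0 < ϰ) (hu : 0 ≤ u) :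
    u * (1 + log ϰ - 2 * log (max (u / s) 1)) ≤ 3 / 2 * √ϰ * s := by
  set M := max (u / s) 1
  have hM : 0 < M := lt_max_of_lt_right one_pos
  have huM : u ≤ s * M := by
    rw [← div_le_iff₀' hs]
    exact le_max_left _ _
  rcases le_total (1 + log ϰ - 2 * log M) 0 with hneg | hpos
  · nlinarith [sqrt_nonneg ϰ]
  · calc u * (1 + log ϰ - 2 * log M) ≤ s * (M * (1 + log ϰ - 2 * log M)) := by
          nlinarith [mul_le_mul_of_nonneg_right huM hpos]
      _ ≤ s * (3 / 2 * √ϰ) := mul_le_mul_of_nonneg_left (mul_one_add_log_sub_two_mul_log_le hϰ hM) hs.le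
      _ = 3 / 2 * √ϰ * s := by ring

lemma half_sub_le_sub_add_log_growthFactor {b s ϰ K u : ℝ} (hb : 0 < b) (hs : 0 < s) (hϰ : 0 < ϰ)
    (hu : 0 ≤ u) (hK : 2 * log (1 / b) + 2 * √ϰ * s ≤ K) :
    (K - √ϰ * s) / 2 ≤ K - u + log (growthFactor b s ϰ u) := by
  rw [log_growthFactor s u hb hϰ]
  rw [one_div, log_inv] at hK
  nlinarith [mul_one_add_log_sub_two_mul_log_max_le hs hϰ hu]

lemma mul_growthFactor_rpow_lt_one_of_le {a b s ϰ K u u' : ℝ} (ha : 0 < a) (ha1 : a < 1)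
    (hb : 0 < b) (hb1 : b ≤ 1) (hs : 0 ≤ s) (hϰ : 0 < ϰ) (hu : 0 ≤ u) (huu' : u ≤ u') (hu'K : u' < K)
    (hE : a * growthFactor b s ϰ u' ^ (K - u')⁻¹ < 1) :
    a * growthFactor b s ϰ u ^ (K - u)⁻¹ < 1 := by
  rw [mul_rpow_inv_lt_one_iff ha (growthFactor_pos s u' hb hϰ) (by linarith),
    log_growthFactor s u' hb hϰ] at hE
  rw [mul_rpow_inv_lt_one_iff ha (growthFactor_pos s u hb hϰ) (by linarith),
    log_growthFactor s u hb hϰ]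
  have hloga : log a < 0 := log_neg ha ha1
  have hlogb : log b ≤ 0 := log_nonpos hb.le hb1
  have hmono : log (max (u / s) 1) ≤ log (max (u' / s) 1) :=
    log_le_log (lt_max_of_lt_right one_pos) (max_le_max (div_le_div_of_nonneg_right huu' hs) le_rfl)
  set c := -log a + 2 * log (max (u' / s) 1) - log ϰ
  have hle : (K - u) * log a + (log b + 2 * u * log (max (u / s) 1) - u * log ϰ)
      ≤ K * log a + log b + u * c := by nlinarith
  rcases le_total c 0 with hc | hc
  · nlinarith [mul_nonpos_of_nonneg_of_nonpos hu hc]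
  · nlinarith [mul_le_mul_of_nonneg_right huu' hc]

end

theorem stmt11_general (a b s ϰ : ℝ) (ha : 0 < a) (ha1 : a < 1) (hb : 0 < b) (hb1 : b ≤ 1)
    (hs : 0 < s) (hϰ : 1 < ϰ) (k : ℕ)
    (ubar : ℝ)
    (hubar : ubar = sSup {u : ℝ | 0 < u ∧ u < (k : ℝ) ∧
      a * (b * (max (u / s) 1) ^ (2 * u) * (1 / ϰ) ^ u) ^ ((k : ℝ) - u)⁻¹ < 1})
    (ζ : ℝ → ℝ)
    (hζ : ∀ u : ℝ, ζ u =
      (1 - a * (b * (max (u / s) 1) ^ (2 * u) * (1 / ϰ) ^ u) ^ ((k : ℝ) - u)⁻¹) ^ ((k : ℝ) - u))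
    (hkbig : 2 * Real.log (1 / b) + 2 * Real.sqrt ϰ * s ≤ (k : ℝ)) :
    (∀ u : ℝ, 0 ≤ u → u < ubar →
      ζ u ≤ Real.exp (-(a / 2) * ((k : ℝ) - Real.sqrt ϰ * s))) ∧
    (a ≤ 1 / 3 → ∀ u : ℝ, 0 ≤ u → u < ubar →
      ζ u ≤ (1 - a / 2) ^ ((k : ℝ) - Real.sqrt ϰ * s)) := by
  have hϰ0 : 0 < ϰ := by linarith
  have admissible : ∀ u, 0 ≤ u → u < ubar →
      0 < (k : ℝ) - u ∧ a * growthFactor b s ϰ u ^ ((k : ℝ) - u)⁻¹ < 1 := by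
    intro u hu hub
    rw [hubar] at hub
    refine (exists_lt_of_lt_csSup ?_ hub).elim fun u' ⟨⟨_, hu'k, hE'⟩, huu'⟩ =>
      ⟨by linarith, mul_growthFactor_rpow_lt_one_of_le ha ha1 hb hb1 hs.le hϰ0 hu huu'.le hu'k hE'⟩
    exact Set.nonempty_iff_ne_empty.2 fun h => by rw [h, Real.sSup_empty] at hub; linarith
  have hsqrt : 0 < Real.sqrt ϰ * s := mul_pos (Real.sqrt_pos.2 hϰ0) hs
  have hlogb : 0 ≤ Real.log (1 / b) := Real.log_nonneg (one_le_one_div hb hb1)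
  refine ⟨fun u hu hub => ?_, fun _ u hu hub => ?_⟩ <;>
    obtain ⟨hm, hE⟩ := admissible u hu hub <;>
    have hD := half_sub_le_sub_add_log_growthFactor hb hs hϰ0 hu hkbig <;>
    rw [hζ u]
  · calc _ ≤ Real.exp (-(a * ((k : ℝ) - u + Real.log (growthFactor b s ϰ u)))) :=
          one_sub_mul_rpow_inv_rpow_le_exp ha.le (growthFactor_pos s u hb hϰ0) hm hE
      _ ≤ Real.exp (-(a / 2) * ((k : ℝ) - Real.sqrt ϰ * s)) := Real.exp_le_exp.2 (by nlinarith)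
  · calc _ ≤ (1 - a / 2) ^ (2 * ((k : ℝ) - u + Real.log (growthFactor b s ϰ u))) :=
          one_sub_mul_rpow_inv_rpow_le_rpow ha.le ha1.le (growthFactor_pos s u hb hϰ0) hm
            (by linarith) hE
      _ ≤ (1 - a / 2) ^ ((k : ℝ) - Real.sqrt ϰ * s) :=
          Real.rpow_le_rpow_of_exponent_ge (by linarith) (by linarith) (by linarith)

theorem stmt11 (a b s ϰ : ℝ) (ha : 0 < a) (ha1 : a < 1) (hb : 0 < b) (hb1 : b ≤ 1)
    (hs : 0 < s) (hϰ : 1 < ϰ) (k : ℕ) (hk : 1 ≤ k)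
    (ubar : ℝ)
    (hubar : ubar = sSup {u : ℝ | 0 < u ∧ u < (k : ℝ) ∧
      a * (b * (max (u / s) 1) ^ (2 * u) * (1 / ϰ) ^ u) ^ ((k : ℝ) - u)⁻¹ < 1})
    (ζ : ℝ → ℝ)
    (hζ : ∀ u : ℝ, ζ u =
      (1 - a * (b * (max (u / s) 1) ^ (2 * u) * (1 / ϰ) ^ u) ^ ((k : ℝ) - u)⁻¹) ^ ((k : ℝ) - u))
    (hkbig : 2 * Real.log (1 / b) + 2 * Real.sqrt ϰ * s ≤ (k : ℝ)) :
    (∀ u : ℝ, 0 ≤ u → u < ubar →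
      ζ u ≤ Real.exp (-(a / 2) * ((k : ℝ) - Real.sqrt ϰ * s))) ∧
    (a ≤ 1 / 3 → ∀ u : ℝ, 0 ≤ u → u < ubar →
      ζ u ≤ (1 - a / 2) ^ ((k : ℝ) - Real.sqrt ϰ * s)) :=
  stmt11_general a b s ϰ ha ha1 hb hb1 hs hϰ k ubar hubar ζ hζ hkbig
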